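/- arXiv:1106.5130 — 6 statements merged into one kernel-verified Lean document; each statement's English description precedes it below -/
import Mathlib

section
/- For any probability distribution P over the positive integers, the function α ↦ H_α(P) is continuous at every point of its region of convergence R(P) (as a function restricted to R(P)). -/
open Filter Topology
open scoped ENNReal

/-- A probability distribution over the positive integers (indexed by `ℕ`):
nonnegative masses summing to `1`. -/
def IsProbDist (p : ℕ → ℝ) : Prop :=
  (∀ n, 0 ≤ p n) ∧ HasSum p 1

/-- The sum `∑ pₙ^α`, computed in `[0,∞]`, with the convention `0^0 = 0`. -/
noncomputable def renyiSum (p : ℕ → ℝ) (α : ℝ) : ℝ≥0∞ :=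
  ∑' n, if p n = 0 then 0 else ENNReal.ofReal (p n ^ α)

/-- The Shannon entropy `H₁(P) = -∑ pₙ log pₙ`, valued in `[0,∞]`. -/
noncomputable def shannonEntropy (p : ℕ → ℝ) : ℝ≥0∞ :=
  ∑' n, ENNReal.ofReal (-(p n * Real.log (p n)))

/-- The Rényi entropy `H_α(P)`, valued in `[0,∞]`: for `α ≠ 1` it is
`(1/(1-α)) log ∑ pₙ^α` (equal to `∞` when the sum diverges), and for `α = 1`
it is the Shannon entropy. -/
noncomputable def renyiEntropy (p : ℕ → ℝ) (α : ℝ) : ℝ≥0∞ :=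
  if α = 1 then shannonEntropy p
  else if renyiSum p α = ∞ then ∞
  else ENNReal.ofReal ((1 - α)⁻¹ * Real.log (renyiSum p α).toReal)

/-- The region of convergence `R(P) = {α ≥ 0 : H_α(P) < ∞}`. -/
def convRegion (p : ℕ → ℝ) : Set ℝ :=
  {α : ℝ | 0 ≤ α ∧ renyiEntropy p α < ∞}

/-- The critical exponent `α_c(P) = inf {α ≥ 0 : H_α(P) < ∞}`. -/
noncomputable def criticalExponent (p : ℕ → ℝ) : ℝ :=
  sInf (convRegion p)

/-- The total variation distance `d_TV(P,Q) = ∑ |pₙ - qₙ|`. -/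
noncomputable def dTV (p q : ℕ → ℝ) : ℝ :=
  ∑' n, |p n - q n|

/-!
Write `pₙ^α = pₙ e^{(1-α)xₙ}` with the surprisals `xₙ = -log pₙ ≥ 0`. Every series
`α ↦ ∑ uₙ e^{(1-α)xₙ}` with `uₙ ≥ 0` has terms decreasing in `α`, so once it converges at `β` it
is continuous on `[β, ∞)` by dominated convergence; this gives continuity at every `α ≠ 1`.

At `α = 1`, put `T(α) = ∑ pₙ e^{(1-α)xₙ}` and `G(α) = ∑ pₙ xₙ e^{(1-α)xₙ}`. Jensen's inequality
gives `(1-α) H₁ ≤ log T(α)`, and `log T ≤ T - 1 ≤ (1-α) G(α)` since `eˢ - 1 ≤ s eˢ`. Hence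
`H_α = log T(α) / (1-α)` lies between `H₁ = G(1)` and `G(α)`. Finally `G` is continuous at `1`
within `R(P)`: by `x e^{-δx} ≤ δ⁻¹` it is dominated near `1` by `T(β)` for any `β < 1` in `R(P)`,
and by `H₁` itself on `[1, ∞)`.
-/

noncomputable def expTerm (u x : ℕ → ℝ) (α : ℝ) (n : ℕ) : ℝ :=
  u n * Real.exp ((1 - α) * x n)

/-- The Rényi entropy of `w`, once `x n = -log (w n)` is substituted. -/
noncomputable def renyiEntropyReal (w x : ℕ → ℝ) (α : ℝ) : ℝ :=
  if α = 1 then ∑' n, w n * x n else (1 - α)⁻¹ * Real.log (∑' n, expTerm w x α n)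

theorem exists_Ici_mem_nhdsWithin_of_forall_lt {P : ℝ → Prop} {s : Set ℝ} {a : ℝ} (ha : P a)
    (h : ∀ b ∈ s, b < a → ∃ c < a, P c) : ∃ c, P c ∧ Set.Ici c ∈ 𝓝[s] a := by
  by_cases hb : ∃ b ∈ s, b < a
  · obtain ⟨b, hbs, hba⟩ := hb
    obtain ⟨c, hca, hc⟩ := h b hbs hba
    exact ⟨c, hc, mem_nhdsWithin_of_mem_nhds (Ici_mem_nhds hca)⟩
  · push Not at hb
    exact ⟨a, ha, Filter.mem_of_superset self_mem_nhdsWithin hb⟩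

theorem mem_uIcc_of_mul_le_mul {a b c y : ℝ} (hc : c ≠ 0) (ha : c * a ≤ c * y)
    (hb : c * y ≤ c * b) : y ∈ Set.uIcc a b := by
  rcases hc.lt_or_gt with hc | hc
  · exact Set.mem_uIcc.2 <|
      Or.inr ⟨(mul_le_mul_left_of_neg hc).1 hb, (mul_le_mul_left_of_neg hc).1 ha⟩
  · exact Set.mem_uIcc.2 <|
      Or.inl ⟨(mul_le_mul_iff_right₀ hc).1 ha, (mul_le_mul_iff_right₀ hc).1 hb⟩

theorem Real.exp_sub_one_le_mul_exp (s : ℝ) : Real.exp s - 1 ≤ s * Real.exp s := by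
  have h := mul_le_mul_of_nonneg_right (Real.add_one_le_exp (-s)) (Real.exp_pos s).le
  rw [← Real.exp_add, neg_add_cancel, Real.exp_zero] at h
  linarith

theorem summable_of_tsum_ofReal_ne_top {ι : Type*} {f : ι → ℝ} (hf : ∀ i, 0 ≤ f i)
    (h : ∑' i, ENNReal.ofReal (f i) ≠ ∞) : Summable f := by
  simpa only [ENNReal.toReal_ofReal (hf _)] using ENNReal.summable_toReal h

section expTerm

variable {u w x : ℕ → ℝ}

@[simp]
theorem expTerm_one (u x : ℕ → ℝ) : expTerm u x 1 = u := by
  ext n; simp [expTerm]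

theorem expTerm_nonneg (hu : ∀ n, 0 ≤ u n) (α : ℝ) (n : ℕ) : 0 ≤ expTerm u x α n :=
  mul_nonneg (hu n) (Real.exp_pos _).le

theorem expTerm_anti (hu : ∀ n, 0 ≤ u n) (hx : ∀ n, 0 ≤ x n) {α β : ℝ} (h : α ≤ β) (n : ℕ) :
    expTerm u x β n ≤ expTerm u x α n := by
  unfold expTerm
  gcongr
  · exact hu n
  · nlinarith [hx n]

theorem Summable.expTerm_of_le (hu : ∀ n, 0 ≤ u n) (hx : ∀ n, 0 ≤ x n) {α β : ℝ}
    (hα : Summable (expTerm u x α)) (h : α ≤ β) : Summable (expTerm u x β) :=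
  hα.of_nonneg_of_le (expTerm_nonneg hu β) (expTerm_anti hu hx h)

theorem continuousOn_tsum_expTerm (hu : ∀ n, 0 ≤ u n) (hx : ∀ n, 0 ≤ x n) {β : ℝ}
    (hβ : Summable (expTerm u x β)) :
    ContinuousOn (fun α => ∑' n, expTerm u x α n) (Set.Ici β) := by
  refine continuousOn_tsum (fun n => ?_) hβ fun n α hα => ?_
  · unfold expTerm; fun_prop
  · rw [Real.norm_of_nonneg (expTerm_nonneg hu α n)]
    exact expTerm_anti hu hx hα n

theorem Summable.expTerm_mul_of_lt (hw : ∀ n, 0 ≤ w n) (hx : ∀ n, 0 ≤ x n) {β γ : ℝ}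
    (hβ : Summable (expTerm w x β)) (h : β < γ) :
    Summable (expTerm (fun n => w n * x n) x γ) := by
  refine (hβ.mul_left (γ - β)⁻¹).of_nonneg_of_le
    (expTerm_nonneg (fun n => mul_nonneg (hw n) (hx n)) γ) fun n => ?_
  have hxn := Real.le_inv_mul_exp (x n) (sub_pos.2 h)
  calc expTerm (fun n => w n * x n) x γ n
      ≤ w n * ((γ - β)⁻¹ * Real.exp ((γ - β) * x n)) * Real.exp ((1 - γ) * x n) := by
        unfold expTerm; gcongr; exact mul_le_mul_of_nonneg_left hxn (hw n)
    _ = (γ - β)⁻¹ * expTerm w x β n := by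
        rw [expTerm, mul_assoc, mul_assoc, ← Real.exp_add]; ring_nf

end expTerm

section renyiEntropyReal

variable {w x : ℕ → ℝ} {α : ℝ}

theorem tsum_expTerm_pos (hw : ∀ n, 0 ≤ w n) (hs : HasSum w 1) (hα : Summable (expTerm w x α)) :
    0 < ∑' n, expTerm w x α n := by
  obtain ⟨n, hn⟩ : ∃ n, 0 < w n := by
    by_contra! h
    have hw0 : w = 0 := funext fun n => le_antisymm (h n) (hw n)
    rw [hw0] at hs
    exact zero_ne_one (hasSum_zero.unique hs)
  exact hα.tsum_pos (expTerm_nonneg hw α) n (mul_pos hn (Real.exp_pos _))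

/-- Jensen's inequality for `log`, via the tangent line `e^m (1 + s - m) ≤ e^s` of `exp` at the
mean `m` of the exponents. -/
theorem mul_tsum_le_log_tsum_expTerm (hw : ∀ n, 0 ≤ w n) (hs : HasSum w 1)
    (hH : Summable fun n => w n * x n) (hα : Summable (expTerm w x α)) :
    (1 - α) * ∑' n, w n * x n ≤ Real.log (∑' n, expTerm w x α n) := by
  generalize hm : (1 - α) * ∑' n, w n * x n = m
  have htangent :=
    ((hs.add (hH.hasSum.mul_left (1 - α))).sub (hs.mul_left m)).mul_left (Real.exp m)
  rw [hm, mul_one, add_sub_cancel_right, mul_one] at htangent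
  have hle : Real.exp m ≤ ∑' n, expTerm w x α n := by
    refine hasSum_le (fun n => ?_) htangent hα.hasSum
    calc Real.exp m * (w n + (1 - α) * (w n * x n) - m * w n)
        = w n * (Real.exp m * ((1 - α) * x n - m + 1)) := by ring
      _ ≤ w n * (Real.exp m * Real.exp ((1 - α) * x n - m)) := by
        gcongr
        · exact hw n
        · exact Real.add_one_le_exp _
      _ = expTerm w x α n := by rw [← Real.exp_add, add_sub_cancel, expTerm]
  exact (Real.le_log_iff_exp_le ((Real.exp_pos m).trans_le hle)).2 hle

theorem log_tsum_expTerm_le (hw : ∀ n, 0 ≤ w n) (hs : HasSum w 1)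
    (hα : Summable (expTerm w x α)) (hG : Summable (expTerm (fun n => w n * x n) x α)) :
    Real.log (∑' n, expTerm w x α n) ≤ (1 - α) * ∑' n, expTerm (fun n => w n * x n) x α n := by
  calc Real.log (∑' n, expTerm w x α n) ≤ (∑' n, expTerm w x α n) - 1 :=
        Real.log_le_sub_one_of_pos (tsum_expTerm_pos hw hs hα)
    _ = ∑' n, (expTerm w x α n - w n) := by rw [hα.tsum_sub hs.summable, hs.tsum_eq]
    _ ≤ ∑' n, (1 - α) * expTerm (fun n => w n * x n) x α n := by
        refine Summable.tsum_le_tsum (fun n => ?_) (hα.sub hs.summable) (hG.mul_left _)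
        calc expTerm w x α n - w n = w n * (Real.exp ((1 - α) * x n) - 1) := by
              rw [expTerm]; ring
          _ ≤ w n * ((1 - α) * x n * Real.exp ((1 - α) * x n)) :=
              mul_le_mul_of_nonneg_left (Real.exp_sub_one_le_mul_exp _) (hw n)
          _ = (1 - α) * expTerm (fun n => w n * x n) x α n := by rw [expTerm]; ring
    _ = _ := tsum_mul_left

theorem renyiEntropyReal_one (w x : ℕ → ℝ) : renyiEntropyReal w x 1 = ∑' n, w n * x n :=
  if_pos rfl

theorem renyiEntropyReal_mem_uIcc (hw : ∀ n, 0 ≤ w n) (hs : HasSum w 1)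
    (hH : Summable fun n => w n * x n) (hα : Summable (expTerm w x α))
    (hG : Summable (expTerm (fun n => w n * x n) x α)) (h1 : α ≠ 1) :
    renyiEntropyReal w x α ∈
      Set.uIcc (∑' n, w n * x n) (∑' n, expTerm (fun n => w n * x n) x α n) := by
  have hc : 1 - α ≠ 0 := sub_ne_zero.2 h1.symm
  have hlog : Real.log (∑' n, expTerm w x α n) = (1 - α) * renyiEntropyReal w x α := by
    rw [renyiEntropyReal, if_neg h1, mul_inv_cancel_left₀ hc]
  exact mem_uIcc_of_mul_le_mul hc (hlog ▸ mul_tsum_le_log_tsum_expTerm hw hs hH hα)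
    (hlog ▸ log_tsum_expTerm_le hw hs hα hG)

theorem continuousWithinAt_renyiEntropyReal_of_ne_one (hw : ∀ n, 0 ≤ w n) (hx : ∀ n, 0 ≤ x n)
    (hs : HasSum w 1) {α₀ : ℝ} (hα₀ : Summable (expTerm w x α₀)) (h1 : α₀ ≠ 1) :
    ContinuousWithinAt (renyiEntropyReal w x) {α | Summable (expTerm w x α)} α₀ := by
  obtain ⟨c, hc, hcS⟩ := exists_Ici_mem_nhdsWithin_of_forall_lt
    (s := {α | Summable (expTerm w x α)}) hα₀ fun b hb hbα => ⟨b, hbα, hb⟩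
  have hT : ContinuousWithinAt (fun α => ∑' n, expTerm w x α n)
      {α | Summable (expTerm w x α)} α₀ :=
    (continuousOn_tsum_expTerm hw hx hc α₀ (mem_of_mem_nhdsWithin hα₀ hcS)).mono_of_mem_nhdsWithin
      hcS
  have hformula : ContinuousWithinAt (fun α => (1 - α)⁻¹ * Real.log (∑' n, expTerm w x α n))
      {α | Summable (expTerm w x α)} α₀ :=
    ((continuousAt_const.sub continuousAt_id).inv₀ (sub_ne_zero.2 h1.symm)).continuousWithinAt.mul
      (hT.log (tsum_expTerm_pos hw hs hα₀).ne')
  refine hformula.congr_of_eventuallyEq ?_ (if_neg h1)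
  filter_upwards [nhdsWithin_le_nhds (isOpen_ne.mem_nhds h1)] with α hα using if_neg hα

theorem continuousWithinAt_renyiEntropyReal_one (hw : ∀ n, 0 ≤ w n) (hx : ∀ n, 0 ≤ x n)
    (hs : HasSum w 1) (hH : Summable fun n => w n * x n) :
    ContinuousWithinAt (renyiEntropyReal w x) {α | Summable (expTerm w x α)} 1 := by
  set S := {α | Summable (expTerm w x α)}
  set G := fun α => ∑' n, expTerm (fun n => w n * x n) x α n
  have hwx : ∀ n, 0 ≤ w n * x n := fun n => mul_nonneg (hw n) (hx n)
  obtain ⟨c, hc, hcS⟩ := exists_Ici_mem_nhdsWithin_of_forall_lt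
    (P := fun c => Summable (expTerm (fun n => w n * x n) x c)) (s := S) (a := 1)
    (by rwa [expTerm_one])
    fun b hb hb1 => ⟨(b + 1) / 2, by linarith, hb.expTerm_mul_of_lt hw hx (by linarith)⟩
  have hG : Tendsto G (𝓝[S] 1) (𝓝 (∑' n, w n * x n)) := by
    have h1S : (1 : ℝ) ∈ S := by simpa [S] using hs.summable
    simpa [G, ContinuousWithinAt] using (continuousOn_tsum_expTerm hwx hx hc 1
      (mem_of_mem_nhdsWithin h1S hcS)).mono_of_mem_nhdsWithin hcS
  have hbetween : ∀ᶠ α in 𝓝[S] 1, renyiEntropyReal w x α ∈ Set.uIcc (∑' n, w n * x n) (G α) := by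
    filter_upwards [self_mem_nhdsWithin, hcS] with α hαS hαc
    rcases eq_or_ne α 1 with rfl | h1
    · rw [renyiEntropyReal_one]; exact Set.left_mem_uIcc
    · exact renyiEntropyReal_mem_uIcc hw hs hH hαS (hc.expTerm_of_le hwx hx hαc) h1
  have hmin : Tendsto (fun α => min (∑' n, w n * x n) (G α)) (𝓝[S] 1)
      (𝓝 (min (∑' n, w n * x n) (∑' n, w n * x n))) := tendsto_const_nhds.min hG
  have hmax : Tendsto (fun α => max (∑' n, w n * x n) (G α)) (𝓝[S] 1)
      (𝓝 (max (∑' n, w n * x n) (∑' n, w n * x n))) := tendsto_const_nhds.max hG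
  rw [min_self] at hmin
  rw [max_self] at hmax
  rw [ContinuousWithinAt, renyiEntropyReal_one]
  exact tendsto_of_tendsto_of_tendsto_of_le_of_le' hmin hmax (hbetween.mono fun _ h => h.1)
    (hbetween.mono fun _ h => h.2)

end renyiEntropyReal

noncomputable def surprisal (p : ℕ → ℝ) (n : ℕ) : ℝ :=
  -Real.log (p n)

theorem Real.rpow_eq_mul_exp_mul_neg_log {a : ℝ} (ha : 0 < a) (α : ℝ) :
    a ^ α = a * Real.exp ((1 - α) * -Real.log a) := by
  rw [Real.rpow_def_of_pos ha]
  nth_rw 2 [← Real.exp_log ha]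
  rw [← Real.exp_add]
  ring_nf

section renyi

variable {p : ℕ → ℝ}

theorem surprisal_nonneg (hp : IsProbDist p) (n : ℕ) : 0 ≤ surprisal p n :=
  neg_nonneg.2 (Real.log_nonpos (hp.1 n) (le_hasSum hp.2 n fun j _ => hp.1 j))

theorem renyiSum_eq_tsum_ofReal_expTerm (hp : IsProbDist p) (α : ℝ) :
    renyiSum p α = ∑' n, ENNReal.ofReal (expTerm p (surprisal p) α n) := by
  refine tsum_congr fun n => ?_
  split_ifs with h
  · simp [expTerm, h]
  · rw [Real.rpow_eq_mul_exp_mul_neg_log ((hp.1 n).lt_of_ne' h), expTerm, surprisal]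

theorem shannonEntropy_eq_tsum_ofReal_mul_surprisal (p : ℕ → ℝ) :
    shannonEntropy p = ∑' n, ENNReal.ofReal (p n * surprisal p n) := by
  simp only [shannonEntropy, surprisal, mul_neg]

theorem summable_expTerm_of_mem_convRegion (hp : IsProbDist p) {α : ℝ} (hα : α ∈ convRegion p) :
    Summable (expTerm p (surprisal p) α) := by
  rcases eq_or_ne α 1 with rfl | h1
  · simpa using hp.2.summable
  · have hfin : renyiSum p α ≠ ∞ := fun h => by
      simp [convRegion, renyiEntropy, h1, h] at hα
    rw [renyiSum_eq_tsum_ofReal_expTerm hp] at hfin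
    exact summable_of_tsum_ofReal_ne_top (expTerm_nonneg hp.1 α) hfin

theorem summable_mul_surprisal_of_one_mem_convRegion (hp : IsProbDist p)
    (h : 1 ∈ convRegion p) : Summable fun n => p n * surprisal p n := by
  have hfin := h.2.ne
  rw [renyiEntropy, if_pos rfl, shannonEntropy_eq_tsum_ofReal_mul_surprisal] at hfin
  exact summable_of_tsum_ofReal_ne_top (fun n => mul_nonneg (hp.1 n) (surprisal_nonneg hp n)) hfin

theorem renyiEntropy_eqOn_ofReal_renyiEntropyReal (hp : IsProbDist p) :
    Set.EqOn (renyiEntropy p) (fun α => ENNReal.ofReal (renyiEntropyReal p (surprisal p) α))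
      (convRegion p) := by
  intro α hα
  dsimp only
  rcases eq_or_ne α 1 with rfl | h1
  · have hnonneg n : 0 ≤ p n * surprisal p n := mul_nonneg (hp.1 n) (surprisal_nonneg hp n)
    rw [renyiEntropy, if_pos rfl, renyiEntropyReal_one,
      shannonEntropy_eq_tsum_ofReal_mul_surprisal, ENNReal.ofReal_tsum_of_nonneg hnonneg
        (summable_mul_surprisal_of_one_mem_convRegion hp hα)]
  · have hnonneg := expTerm_nonneg (x := surprisal p) hp.1 α
    rw [renyiEntropy, if_neg h1, renyiSum_eq_tsum_ofReal_expTerm hp,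
      ← ENNReal.ofReal_tsum_of_nonneg hnonneg (summable_expTerm_of_mem_convRegion hp hα),
      if_neg ENNReal.ofReal_ne_top, ENNReal.toReal_ofReal (tsum_nonneg hnonneg), renyiEntropyReal,
      if_neg h1]

end renyi

/-- For any probability distribution `P`, the function
`α ↦ H_α(P)` is continuous at every point of `R(P)`, as a function restricted
to `R(P)`. -/
theorem stmt2 (p : ℕ → ℝ) (hp : IsProbDist p) :
    ContinuousOn (fun α : ℝ => renyiEntropy p α) (convRegion p) := by
  have hR : convRegion p ⊆ {α | Summable (expTerm p (surprisal p) α)} :=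
    fun _ hα => summable_expTerm_of_mem_convRegion hp hα
  refine ContinuousOn.congr (fun α hα => ?_) (renyiEntropy_eqOn_ofReal_renyiEntropyReal hp)
  refine ENNReal.continuous_ofReal.continuousAt.comp_continuousWithinAt ?_
  rcases eq_or_ne α 1 with rfl | h1
  · exact (continuousWithinAt_renyiEntropyReal_one hp.1 (surprisal_nonneg hp) hp.2
      (summable_mul_surprisal_of_one_mem_convRegion hp hα)).mono hR
  · exact (continuousWithinAt_renyiEntropyReal_of_ne_one hp.1 (surprisal_nonneg hp) hp.2
      (hR hα) h1).mono hR
end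

section
/- Let P be a probability distribution over the positive integers with critical exponent α_c = α_c(P). If H_{α_c}(P) = ∞, then lim_{α→α_c+} H_α(P) = ∞, i.e. H_α(P) tends to infinity as α decreases to the critical exponent. -/
open Filter Topology
open scoped ENNReal

/-!
Let `H_a = ∞`. Each term of `∑ pₙ^α` and of the Shannon sum is the limit of continuous
functions of `α`, and by Fatou for sums a sum of nonnegative terms converging termwise has
liminf at least the sum of the limits, so an infinite sum at `a` forces large sums near `a`.
If `0 ≤ a < 1` this applies to `∑ pₙ^α` itself, and `H_α ≥ log ∑ pₙ^α` for `0 ≤ α < 1`.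
If `a = 1`, the bound `-log S ≥ 1 - S` gives `H_α ≥ ∑ (pₙ - pₙ^α)/(α - 1)` for `α > 1`,
and these terms tend to `-pₙ log pₙ`. The case `a > 1` cannot occur: there
`∑ pₙ^α ≤ ∑ pₙ = 1`.
-/

theorem ENNReal.tendsto_tsum_nhds_top_of_tendsto {ι α : Type*} {l : Filter α}
    {f : ι → α → ℝ≥0∞} {g : ι → ℝ≥0∞} (hf : ∀ i, Tendsto (f i) l (𝓝 (g i)))
    (hg : ∑' i, g i = ∞) : Tendsto (fun a => ∑' i, f i a) l (𝓝 ∞) := by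
  refine ENNReal.tendsto_nhds_top fun n => ?_
  obtain ⟨F, hF⟩ : ∃ F : Finset ι, (n : ℝ≥0∞) < ∑ i ∈ F, g i :=
    lt_iSup_iff.mp (by rw [← ENNReal.tsum_eq_iSup_sum, hg]; exact ENNReal.natCast_lt_top n)
  filter_upwards [(tendsto_finsetSum F fun i _ => hf i).eventually_const_lt hF] with a ha
  exact ha.trans_le (ENNReal.sum_le_tsum F)

theorem Real.tendsto_sub_rpow_div_sub_one {x : ℝ} (hx : 0 ≤ x) :
    Tendsto (fun α => (x - x ^ α) / (α - 1)) (𝓝[≠] 1) (𝓝 (-(x * Real.log x))) := by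
  rcases hx.eq_or_lt with rfl | hx
  · have hne : ∀ᶠ α in 𝓝[≠] (1 : ℝ), α ≠ 0 :=
      nhdsWithin_le_nhds (eventually_ne_nhds one_ne_zero)
    refine tendsto_const_nhds.congr' ?_
    filter_upwards [hne] with α hα
    simp [Real.zero_rpow hα]
  · have hslope := hasDerivAt_iff_tendsto_slope.mp
      (Real.hasStrictDerivAt_const_rpow hx 1).hasDerivAt
    rw [Real.rpow_one] at hslope
    convert hslope.neg using 2 with α
    rw [slope_def_field, Real.rpow_one]
    ring

section Renyi

variable {p : ℕ → ℝ} {α : ℝ}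

theorem IsProbDist.le_one (hp : IsProbDist p) (n : ℕ) : p n ≤ 1 :=
  le_hasSum hp.2 n fun m _ => hp.1 m

theorem IsProbDist.rpow_le_self (hp : IsProbDist p) (hα : 1 ≤ α) (n : ℕ) : p n ^ α ≤ p n :=
  Real.rpow_le_self_of_le_one (hp.1 n) (hp.le_one n) hα

theorem IsProbDist.summable_rpow (hp : IsProbDist p) (hα : 1 ≤ α) :
    Summable fun n => p n ^ α :=
  Summable.of_nonneg_of_le (fun n => Real.rpow_nonneg (hp.1 n) α) (hp.rpow_le_self hα)
    hp.2.summable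

theorem continuous_renyiSum_summand (x : ℝ) :
    Continuous fun α : ℝ => if x = 0 then (0 : ℝ≥0∞) else ENNReal.ofReal (x ^ α) := by
  split_ifs with hx
  · exact continuous_const
  · exact ENNReal.continuous_ofReal.comp (Real.continuous_const_rpow hx)

theorem tendsto_renyiSum_nhds_top {a : ℝ} (h : renyiSum p a = ∞) :
    Tendsto (renyiSum p) (𝓝 a) (𝓝 ∞) :=
  ENNReal.tendsto_tsum_nhds_top_of_tendsto
    (fun n => (continuous_renyiSum_summand (p n)).tendsto a) h

theorem renyiSum_le_one (hp : IsProbDist p) (hα : 1 ≤ α) : renyiSum p α ≤ 1 :=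
  calc renyiSum p α ≤ ∑' n, ENNReal.ofReal (p n) := by
        refine ENNReal.tsum_le_tsum fun n => ?_
        split_ifs
        · exact zero_le
        · exact ENNReal.ofReal_le_ofReal (hp.rpow_le_self hα n)
    _ = 1 := by
        rw [← ENNReal.ofReal_tsum_of_nonneg hp.1 hp.2.summable, hp.2.tsum_eq, ENNReal.ofReal_one]

theorem renyiSum_eq_ofReal_tsum (hp : IsProbDist p) (hα : 1 ≤ α) :
    renyiSum p α = ENNReal.ofReal (∑' n, p n ^ α) := by
  rw [ENNReal.ofReal_tsum_of_nonneg (fun n => Real.rpow_nonneg (hp.1 n) α) (hp.summable_rpow hα)]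
  refine tsum_congr fun n => ?_
  split_ifs with hn
  · rw [hn, Real.zero_rpow (by linarith), ENNReal.ofReal_zero]
  · rfl

theorem renyiSum_eq_top_of_renyiEntropy_eq_top (hα : α ≠ 1) (h : renyiEntropy p α = ∞) :
    renyiSum p α = ∞ := by
  by_contra hS
  simp [renyiEntropy, hα, hS] at h

theorem ofReal_le_renyiEntropy_of_mem_Ico {M : ℝ} (hα : α ∈ Set.Ico 0 1) (hM : 0 ≤ M)
    (h : ENNReal.ofReal (Real.exp M) ≤ renyiSum p α) : ENNReal.ofReal M ≤ renyiEntropy p α := by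
  rw [renyiEntropy, if_neg hα.2.ne]
  split_ifs with hS
  · exact le_top
  have hexp : Real.exp M ≤ (renyiSum p α).toReal := (ENNReal.ofReal_le_iff_le_toReal hS).mp h
  have hlog : M ≤ Real.log (renyiSum p α).toReal :=
    (Real.le_log_iff_exp_le ((Real.exp_pos M).trans_le hexp)).mpr hexp
  have hinv : 1 ≤ (1 - α)⁻¹ := (one_le_inv₀ (by linarith [hα.2])).mpr (by linarith [hα.1])
  refine ENNReal.ofReal_le_ofReal ?_
  calc M ≤ Real.log (renyiSum p α).toReal := hlog
    _ ≤ (1 - α)⁻¹ * Real.log (renyiSum p α).toReal :=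
        le_mul_of_one_le_left (hM.trans hlog) hinv

theorem tendsto_renyiEntropy_of_tendsto_renyiSum {l : Filter ℝ} (hl : ∀ᶠ α in l, α ∈ Set.Ico 0 1)
    (h : Tendsto (renyiSum p) l (𝓝 ∞)) : Tendsto (renyiEntropy p) l (𝓝 ∞) := by
  refine ENNReal.tendsto_nhds_top fun n => ?_
  filter_upwards [hl, h.eventually (lt_mem_nhds ENNReal.ofReal_lt_top)] with α hα hS
  calc (n : ℝ≥0∞) < ENNReal.ofReal (n + 1) := by
        rw [ENNReal.ofReal_add (by positivity) zero_le_one, ENNReal.ofReal_natCast,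
          ENNReal.ofReal_one]
        exact ENNReal.lt_add_right (ENNReal.natCast_ne_top n) one_ne_zero
    _ ≤ renyiEntropy p α := ofReal_le_renyiEntropy_of_mem_Ico hα (by positivity) hS.le

theorem tsum_sub_rpow_div_le_renyiEntropy (hp : IsProbDist p) (hα : 1 < α) :
    ∑' n, ENNReal.ofReal ((p n - p n ^ α) / (α - 1)) ≤ renyiEntropy p α := by
  have hα0 : 0 < α - 1 := sub_pos.mpr hα
  set S := ∑' n, p n ^ α
  have hsum := hp.summable_rpow hα.le
  obtain ⟨n₀, hn₀⟩ : ∃ n, p n ≠ 0 := by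
    by_contra! hzero
    have hp0 : p = 0 := funext hzero
    exact zero_ne_one (hasSum_zero.unique (hp0 ▸ hp.2))
  have hS : 0 < S := hsum.tsum_pos (fun n => Real.rpow_nonneg (hp.1 n) α) n₀
    (Real.rpow_pos_of_pos ((hp.1 n₀).lt_of_ne' hn₀) α)
  have hdiff : ∑' n, (p n - p n ^ α) / (α - 1) = (1 - S) / (α - 1) := by
    rw [tsum_div_const, hp.2.summable.tsum_sub hsum, hp.2.tsum_eq]
  rw [← ENNReal.ofReal_tsum_of_nonneg
      (fun n => div_nonneg (sub_nonneg.mpr (hp.rpow_le_self hα.le n)) hα0.le)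
      ((hp.2.summable.sub hsum).div_const _),
    hdiff, renyiEntropy, if_neg hα.ne', renyiSum_eq_ofReal_tsum hp hα.le,
    if_neg ENNReal.ofReal_ne_top, ENNReal.toReal_ofReal hS.le]
  refine ENNReal.ofReal_le_ofReal ?_
  calc (1 - S) / (α - 1) ≤ -Real.log S / (α - 1) := by
        gcongr
        linarith [Real.log_le_sub_one_of_pos hS]
    _ = (1 - α)⁻¹ * Real.log S := by
        rw [← neg_sub α 1, inv_neg, neg_mul, neg_div, div_eq_inv_mul]

theorem tendsto_renyiEntropy_nhdsGT_one (hp : IsProbDist p) (h : shannonEntropy p = ∞) :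
    Tendsto (renyiEntropy p) (𝓝[>] 1) (𝓝 ∞) := by
  have hterm : ∀ n, Tendsto (fun α => ENNReal.ofReal ((p n - p n ^ α) / (α - 1))) (𝓝[>] 1)
      (𝓝 (ENNReal.ofReal (-(p n * Real.log (p n))))) := fun n =>
    ENNReal.tendsto_ofReal ((Real.tendsto_sub_rpow_div_sub_one (hp.1 n)).mono_left
      (nhdsWithin_mono _ fun _ hx => ne_of_gt hx))
  refine tendsto_nhds_top_mono (ENNReal.tendsto_tsum_nhds_top_of_tendsto hterm h) ?_
  filter_upwards [self_mem_nhdsWithin] with α hα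
  exact tsum_sub_rpow_div_le_renyiEntropy hp hα

theorem tendsto_renyiEntropy_nhdsGT_of_eq_top (hp : IsProbDist p) {a : ℝ} (ha₀ : 0 ≤ a)
    (h : renyiEntropy p a = ∞) : Tendsto (renyiEntropy p) (𝓝[>] a) (𝓝 ∞) := by
  rcases eq_or_ne a 1 with rfl | ha
  · rw [renyiEntropy, if_pos rfl] at h
    exact tendsto_renyiEntropy_nhdsGT_one hp h
  · have hS := renyiSum_eq_top_of_renyiEntropy_eq_top ha h
    have ha1 : a < 1 := lt_of_not_ge fun h1 => by
      simpa [hS] using renyiSum_le_one hp h1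
    have hIco : ∀ᶠ α in 𝓝[>] a, α ∈ Set.Ico 0 1 := by
      filter_upwards [self_mem_nhdsWithin, nhdsWithin_le_nhds (eventually_lt_nhds ha1)]
        with α hα hα1
      exact ⟨ha₀.trans hα.le, hα1⟩
    exact tendsto_renyiEntropy_of_tendsto_renyiSum hIco
      ((tendsto_renyiSum_nhds_top hS).mono_left nhdsWithin_le_nhds)

end Renyi

/-- If `H_{α_c}(P) = ∞` at the critical exponent `α_c = α_c(P)`,
then `H_α(P) → ∞` as `α` decreases to `α_c`. -/
theorem stmt3 (p : ℕ → ℝ) (hp : IsProbDist p)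
    (hdiv : renyiEntropy p (criticalExponent p) = ∞) :
    Tendsto (fun α : ℝ => renyiEntropy p α)
      (𝓝[>] (criticalExponent p)) (𝓝 ∞) :=
  tendsto_renyiEntropy_nhdsGT_of_eq_top hp (Real.sInf_nonneg fun _ hα => hα.1) hdiv
end

section
/- For every c ∈ [0, 1], the set Γ(c) of probability distributions over the positive integers with critical exponent equal to c is dense in the set Γ of all probability distributions over the positive integers, with respect to the total variation distance: for every P ∈ Γ and every ε > 0 there exists S ∈ Γ(c) with d_TV(P, S) ≤ ε. -/
open Filter Topology
open scoped ENNReal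

/-!
Fix `c ∈ [0, 1]` and a distribution `Q` whose Rényi sums `∑ qₙ^α` converge exactly for `α ≥ c`:
a point mass for `c = 0`, and `qₙ ∝ ((n + 3) log²(n + 3))^(-1/c)` for `c > 0`, since
`∑ ((n + 3) log²(n + 3))^(-t)` converges exactly for `t ≥ 1`. Given `P` and `ε`, keep the first
`M` masses of `P` (scaled by `1 - θ`) and put the missing mass `η` on a copy of `Q`. For `M`
large and `θ` small the result is `ε`-close to `P`, and since it agrees with `η Q` beyond `M`,
its Rényi sums converge exactly when those of `Q` do, so its critical exponent is `c`.
-/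

open Finset

theorem tsum_ofReal_ne_top_iff {ι : Type*} {f : ι → ℝ} (hf : ∀ i, 0 ≤ f i) :
    ∑' i, ENNReal.ofReal (f i) ≠ ∞ ↔ Summable f :=
  ⟨fun h => (ENNReal.summable_toReal h).congr fun i => ENNReal.toReal_ofReal (hf i),
    Summable.tsum_ofReal_ne_top⟩

theorem ENNReal.tsum_ne_top_iff_tsum_nat_add {f : ℕ → ℝ≥0∞} (hf : ∀ n, f n ≠ ∞) (k : ℕ) :
    ∑' n, f n ≠ ∞ ↔ ∑' n, f (n + k) ≠ ∞ := by
  rw [← (ENNReal.summable (f := fun n => f (n + k))).sum_add_tsum_nat_add', ENNReal.add_ne_top,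
    ENNReal.sum_ne_top]
  exact and_iff_right fun n _ => hf n

theorem hasSum_ite_lt (f : ℕ → ℝ) (M : ℕ) :
    HasSum (fun n => if n < M then f n else 0) (∑ n ∈ range M, f n) := by
  convert hasSum_sum_of_ne_finset_zero (L := .unconditional ℕ) (s := range M)
    (f := fun n => if n < M then f n else 0) fun n hn => if_neg (by simpa using hn) using 1
  exact (sum_congr rfl fun n hn => if_pos (mem_range.1 hn)).symm

section Renyi

variable {p : ℕ → ℝ} {α c : ℝ}

theorem mem_convRegion_iff (hα : α ≠ 1) :
    α ∈ convRegion p ↔ 0 ≤ α ∧ renyiSum p α ≠ ∞ := by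
  unfold convRegion renyiEntropy
  by_cases h : renyiSum p α = ∞ <;> simp [hα, h]

theorem criticalExponent_eq_of_renyiSum_ne_top_iff (hc0 : 0 ≤ c) (hc1 : c ≤ 1)
    (h : ∀ α, 0 ≤ α → (renyiSum p α ≠ ∞ ↔ c ≤ α)) : criticalExponent p = c := by
  have exists_lt : ∀ w, c < w → ∃ a ∈ convRegion p, a < w := by
    intro w hw
    obtain ⟨a, hca, haw, ha1⟩ : ∃ a, c < a ∧ a < w ∧ a ≠ 1 := by
      rcases le_or_gt w 1 with hw1 | hw1
      · exact ⟨(c + w) / 2, by linarith, by linarith, (by linarith : (c + w) / 2 < 1).ne⟩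
      · exact ⟨(1 + w) / 2, by linarith, by linarith, (by linarith : 1 < (1 + w) / 2).ne'⟩
    exact ⟨a, (mem_convRegion_iff ha1).2 ⟨by linarith, (h a (by linarith)).2 hca.le⟩, haw⟩
  refine csInf_eq_of_forall_ge_of_forall_gt_exists_lt ?_ (fun a ha => ?_) exists_lt
  · obtain ⟨a, ha, -⟩ := exists_lt (c + 1) (by linarith)
    exact ⟨a, ha⟩
  · by_contra! hac
    obtain ⟨ha0, hfin⟩ := (mem_convRegion_iff (hac.trans_le hc1).ne).1 ha
    exact hac.not_ge ((h a ha0).1 hfin)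

theorem renyiSum_ne_top_iff_of_eq_mul {s q : ℕ → ℝ} {η : ℝ} {M : ℕ} (hq : ∀ n, 0 ≤ q n)
    (hη : 0 < η) (hs : ∀ n, M ≤ n → s n = η * q n) (α : ℝ) :
    renyiSum s α ≠ ∞ ↔ renyiSum q α ≠ ∞ := by
  have term_ne_top (r : ℕ → ℝ) (n : ℕ) :
      (if r n = 0 then 0 else ENNReal.ofReal (r n ^ α)) ≠ ∞ := by
    split_ifs <;> simp
  have tail (n : ℕ) : (if s (n + M) = 0 then 0 else ENNReal.ofReal (s (n + M) ^ α)) =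
      ENNReal.ofReal (η ^ α) * if q (n + M) = 0 then 0 else ENNReal.ofReal (q (n + M) ^ α) := by
    rw [hs _ (Nat.le_add_left M n)]
    by_cases h : q (n + M) = 0
    · simp [h]
    · rw [if_neg (mul_ne_zero hη.ne' h), if_neg h, Real.mul_rpow hη.le (hq _),
        ENNReal.ofReal_mul (by positivity)]
  unfold renyiSum
  rw [ENNReal.tsum_ne_top_iff_tsum_nat_add (term_ne_top s) M,
    ENNReal.tsum_ne_top_iff_tsum_nat_add (term_ne_top q) M, tsum_congr tail,
    ENNReal.tsum_mul_left]
  simp [ENNReal.mul_eq_top, Real.rpow_pos_of_pos hη α]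

theorem renyiSum_ne_top_iff_summable_of_pos (hp : ∀ n, 0 < p n) (α : ℝ) :
    renyiSum p α ≠ ∞ ↔ Summable fun n => p n ^ α := by
  have hp0 : ∀ n, p n ≠ 0 := fun n => (hp n).ne'
  simp only [renyiSum, hp0, if_false]
  exact tsum_ofReal_ne_top_iff fun n => Real.rpow_nonneg (hp n).le α

theorem renyiSum_single (α : ℝ) : renyiSum (Pi.single 0 1) α = 1 := by
  rw [renyiSum, tsum_eq_single 0 fun n hn => by simp [hn]]
  simp

end Renyi

noncomputable def logSqWeight (m : ℕ) : ℝ := ((m : ℝ) + 3) * Real.log ((m : ℝ) + 3) ^ 2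

theorem one_le_log_natCast_add_three (m : ℕ) : 1 ≤ Real.log ((m : ℝ) + 3) := by
  rw [Real.le_log_iff_exp_le (by positivity)]
  have : (0 : ℝ) ≤ m := m.cast_nonneg
  linarith [Real.exp_one_lt_d9]

theorem one_le_logSqWeight (m : ℕ) : 1 ≤ logSqWeight m :=
  one_le_mul_of_one_le_of_one_le (by linarith [m.cast_nonneg (α := ℝ)])
    (one_le_pow₀ (one_le_log_natCast_add_three m))

theorem logSqWeight_pos (m : ℕ) : 0 < logSqWeight m :=
  zero_lt_one.trans_le (one_le_logSqWeight m)

theorem logSqWeight_mono : Monotone logSqWeight := by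
  intro m n hmn
  have hx : (m : ℝ) + 3 ≤ n + 3 := by gcongr
  have hlog := Real.log_le_log (by positivity) hx
  have := one_le_log_natCast_add_three m
  unfold logSqWeight
  gcongr

theorem natCast_mul_log_sq_le_logSqWeight (m : ℕ) :
    (m : ℝ) * Real.log m ^ 2 ≤ logSqWeight m := by
  rcases m.eq_zero_or_pos with rfl | hm
  · simp [(logSqWeight_pos 0).le]
  have hm : (1 : ℝ) ≤ m := by exact_mod_cast hm
  have hlog := Real.log_le_log (by positivity) (by linarith : (m : ℝ) ≤ m + 3)
  have := Real.log_nonneg hm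
  unfold logSqWeight
  gcongr
  linarith

theorem summable_logSqWeight_inv : Summable fun m => (logSqWeight m)⁻¹ := by
  -- Cauchy condensation: `2ᵏ / logSqWeight (2ᵏ) ≤ 1 / (k log 2)²`.
  rw [← summable_condensed_iff_of_nonneg (fun m => (inv_pos.2 (logSqWeight_pos m)).le)
    fun m n _ hmn => inv_anti₀ (logSqWeight_pos m) (logSqWeight_mono hmn),
    ← summable_nat_add_iff 1]
  have hlog2 : 0 < Real.log 2 := Real.log_pos one_lt_two
  refine Summable.of_nonneg_of_le
    (fun k => mul_nonneg (by positivity) (inv_pos.2 (logSqWeight_pos _)).le) (fun k => ?_)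
    (((summable_nat_add_iff 1).2 (Real.summable_nat_pow_inv.2 one_lt_two)).mul_left
      (Real.log 2 ^ 2)⁻¹)
  have hle := natCast_mul_log_sq_le_logSqWeight (2 ^ (k + 1))
  push_cast at hle ⊢
  rw [Real.log_pow] at hle
  push_cast at hle
  calc (2 : ℝ) ^ (k + 1) * (logSqWeight (2 ^ (k + 1)))⁻¹
      ≤ 2 ^ (k + 1) * (2 ^ (k + 1) * (((k : ℝ) + 1) * Real.log 2) ^ 2)⁻¹ := by
        gcongr
    _ = (Real.log 2 ^ 2)⁻¹ * (((k : ℝ) + 1) ^ 2)⁻¹ := by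
        field_simp

theorem exists_mul_logSqWeight_rpow_le {t : ℝ} (ht0 : 0 < t) (ht1 : t < 1) :
    ∃ C > 0, ∀ m, C * logSqWeight m ^ t ≤ (m : ℝ) + 3 := by
  obtain ⟨δ, hδ, hδt⟩ : ∃ δ, 0 < δ ∧ t⁻¹ = 1 + δ + δ :=
    ⟨(t⁻¹ - 1) / 2, by linarith [(one_lt_inv₀ ht0).2 ht1], by ring⟩
  refine ⟨(δ ^ 2) ^ t, by positivity, fun m => ?_⟩
  set x : ℝ := (m : ℝ) + 3
  have hx : 0 < x := by positivity
  have hX : logSqWeight m ≤ x ^ t⁻¹ / δ ^ 2 := calc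
    logSqWeight m = x * Real.log x ^ 2 := rfl
    _ ≤ x * (x ^ δ / δ) ^ 2 := by
        have := one_le_log_natCast_add_three m
        gcongr
        exact Real.log_le_rpow_div hx.le hδ
    _ = x ^ t⁻¹ / δ ^ 2 := by
        rw [hδt, Real.rpow_add hx, Real.rpow_add hx, Real.rpow_one]
        ring
  calc (δ ^ 2) ^ t * logSqWeight m ^ t ≤ (δ ^ 2) ^ t * (x ^ t⁻¹ / δ ^ 2) ^ t := by
        gcongr
        exact (logSqWeight_pos m).le
    _ = x := by
        rw [Real.div_rpow (by positivity) (by positivity), Real.rpow_inv_rpow hx.le ht0.ne']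
        field_simp

theorem not_summable_logSqWeight_rpow_neg {t : ℝ} (ht0 : 0 < t) (ht1 : t < 1) :
    ¬Summable fun m => logSqWeight m ^ (-t) := by
  intro hsum
  obtain ⟨C, hC, hle⟩ := exists_mul_logSqWeight_rpow_le ht0 ht1
  have : Summable fun m : ℕ => ((m : ℝ) + 3)⁻¹ := by
    refine Summable.of_nonneg_of_le (fun m => by positivity) (fun m => ?_) (hsum.mul_left C⁻¹)
    rw [Real.rpow_neg (logSqWeight_pos m).le, ← mul_inv]
    exact inv_anti₀ (mul_pos hC (Real.rpow_pos_of_pos (logSqWeight_pos m) t)) (hle m)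
  exact Real.not_summable_natCast_inv ((summable_nat_add_iff 3).1 (by exact_mod_cast this))

theorem summable_logSqWeight_rpow_neg_iff (t : ℝ) :
    (Summable fun m => logSqWeight m ^ (-t)) ↔ 1 ≤ t := by
  have hnonneg (s : ℝ) (m : ℕ) : 0 ≤ logSqWeight m ^ s := Real.rpow_nonneg (logSqWeight_pos m).le s
  constructor
  · intro hsum
    by_contra! ht
    refine not_summable_logSqWeight_rpow_neg (t := max t (1 / 2)) (by positivity)
      (max_lt ht (by norm_num)) (hsum.of_nonneg_of_le (hnonneg _) fun m => ?_)
    exact Real.rpow_le_rpow_of_exponent_le (one_le_logSqWeight m) (neg_le_neg (le_max_left _ _))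
  · intro ht
    refine summable_logSqWeight_inv.of_nonneg_of_le (hnonneg _) fun m => ?_
    rw [← Real.rpow_neg_one]
    exact Real.rpow_le_rpow_of_exponent_le (one_le_logSqWeight m) (neg_le_neg ht)

theorem exists_isProbDist_renyiSum_ne_top_iff_of_pos {c : ℝ} (hc0 : 0 < c) (hc1 : c ≤ 1) :
    ∃ q, IsProbDist q ∧ ∀ α, renyiSum q α ≠ ∞ ↔ c ≤ α := by
  set b : ℕ → ℝ := fun m => logSqWeight m ^ (-c⁻¹)
  have hb (m : ℕ) : 0 < b m := Real.rpow_pos_of_pos (logSqWeight_pos m) _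
  have hbs : Summable b := (summable_logSqWeight_rpow_neg_iff _).2 ((one_le_inv₀ hc0).2 hc1)
  set Z := ∑' m, b m
  have hZ : 0 < Z := hbs.tsum_pos (fun m => (hb m).le) 0 (hb 0)
  have hq (m : ℕ) : 0 < Z⁻¹ * b m := mul_pos (inv_pos.2 hZ) (hb m)
  refine ⟨fun m => Z⁻¹ * b m, ⟨fun m => (hq m).le, ?_⟩, fun α => ?_⟩
  · have := hbs.hasSum.mul_left Z⁻¹
    rwa [inv_mul_cancel₀ hZ.ne'] at this
  · have hpow (m : ℕ) : (Z⁻¹ * b m) ^ α = Z⁻¹ ^ α * logSqWeight m ^ (-(c⁻¹ * α)) := by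
      rw [Real.mul_rpow (inv_pos.2 hZ).le (hb m).le, ← Real.rpow_mul (logSqWeight_pos m).le,
        neg_mul]
    rw [renyiSum_ne_top_iff_summable_of_pos hq]
    simp_rw [hpow]
    rw [summable_mul_left_iff (Real.rpow_pos_of_pos (inv_pos.2 hZ) α).ne',
      summable_logSqWeight_rpow_neg_iff, one_le_inv_mul₀ hc0]

theorem exists_isProbDist_renyiSum_ne_top_iff {c : ℝ} (hc0 : 0 ≤ c) (hc1 : c ≤ 1) :
    ∃ q, IsProbDist q ∧ ∀ α, 0 ≤ α → (renyiSum q α ≠ ∞ ↔ c ≤ α) := by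
  rcases hc0.eq_or_lt with rfl | hc0
  · have hδ : (0 : ℕ → ℝ) ≤ Pi.single 0 1 := Pi.single_nonneg.2 zero_le_one
    exact ⟨Pi.single 0 1, ⟨hδ, hasSum_pi_single 0 1⟩, fun α hα => by simp [renyiSum_single, hα]⟩
  · obtain ⟨q, hq, h⟩ := exists_isProbDist_renyiSum_ne_top_iff_of_pos hc0 hc1
    exact ⟨q, hq, fun α _ => h α⟩

theorem dTV_le_of_abs_sub_le {p s b : ℕ → ℝ} {B : ℝ} (h : ∀ n, |p n - s n| ≤ b n)
    (hb : HasSum b B) : dTV p s ≤ B :=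
  hasSum_le h (Summable.of_nonneg_of_le (fun _ => abs_nonneg _) h hb.summable).hasSum hb

theorem exists_isProbDist_dTV_le_eq_mul {p q : ℕ → ℝ} (hp : IsProbDist p) (hq : IsProbDist q)
    {ε : ℝ} (hε : 0 < ε) :
    ∃ s, IsProbDist s ∧ dTV p s ≤ ε ∧ ∃ η > 0, ∃ M, ∀ n, M ≤ n → s n = η * q n := by
  obtain ⟨M, hM⟩ :=
    (hp.2.tendsto_sum_nat.eventually_const_lt (by linarith : 1 - ε / 4 < 1)).exists
  set P := ∑ n ∈ range M, p n
  have hP : P ≤ 1 := sum_le_hasSum _ (fun n _ => hp.1 n) hp.2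
  set θ := min (ε / 4) 1
  have hθ0 : 0 < θ := lt_min (by linarith) one_pos
  have hθε : θ ≤ ε / 4 := min_le_left _ _
  have hθ1 : θ ≤ 1 := min_le_right _ _
  set η := 1 - (1 - θ) * P
  have hηθ : θ ≤ η := by nlinarith
  set h : ℕ → ℝ := fun n => if n < M then p n else 0
  have hh : HasSum h P := hasSum_ite_lt p M
  have hh0 (n : ℕ) : 0 ≤ h n := by
    simp only [h]
    split_ifs
    exacts [hp.1 n, le_rfl]
  have hhp (n : ℕ) : h n ≤ p n := by
    simp only [h]
    split_ifs
    exacts [le_rfl, hp.1 n]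
  refine ⟨fun n => (1 - θ) * h n + η * q n, ⟨fun n => ?_, ?_⟩, ?_, η, by linarith, M,
    fun n hn => by simp [h, not_lt.2 hn]⟩
  · exact add_nonneg (mul_nonneg (by linarith) (hh0 n)) (mul_nonneg (by linarith) (hq.1 n))
  · have := (hh.mul_left (1 - θ)).add (hq.2.mul_left η)
    rwa [show (1 - θ) * P + η * 1 = 1 by ring] at this
  · refine (dTV_le_of_abs_sub_le (fun n => abs_le.2 ⟨?_, ?_⟩)
      (((hp.2.sub hh).add (hh.mul_left θ)).add (hq.2.mul_left η))).trans ?_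
    · nlinarith [hq.1 n, hh0 n, hhp n]
    · nlinarith [hq.1 n, hh0 n, hhp n]
    · nlinarith

/-- For every `c ∈ [0,1]`, the set `Γ(c)` of probability
distributions with critical exponent `c` is dense in the set of all probability
distributions with respect to the total variation distance. -/
theorem stmt9 (c : ℝ) (hc0 : 0 ≤ c) (hc1 : c ≤ 1)
    (p : ℕ → ℝ) (hp : IsProbDist p) (ε : ℝ) (hε : 0 < ε) :
    ∃ s : ℕ → ℝ, IsProbDist s ∧ criticalExponent s = c ∧ dTV p s ≤ ε := by
  obtain ⟨q, hq, hqc⟩ := exists_isProbDist_renyiSum_ne_top_iff hc0 hc1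
  obtain ⟨s, hs, hps, η, hη, M, hsq⟩ := exists_isProbDist_dTV_le_eq_mul hp hq hε
  refine ⟨s, hs, criticalExponent_eq_of_renyiSum_ne_top_iff hc0 hc1 fun α hα => ?_, hps⟩
  exact (renyiSum_ne_top_iff_of_eq_mul hq.1 hη hsq α).trans (hqc α hα)
end

section
/- Let P_1, …, P_K be probability distributions over the positive integers and let T = Σ_{k=1}^K λ_k P_k be their mixture, where λ_k > 0 and Σ_{k=1}^K λ_k = 1. Then α_c(T) = max_{1 ≤ k ≤ K} α_c(P_k) and R(T) = ∩_{k=1}^K R(P_k). -/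
open Filter Topology
open scoped ENNReal

/-!
Termwise, `λₖ pₖ(n) ≤ t(n) ≤ maxₖ pₖ(n)` for the mixture `t`, so for `α ≥ 0` the sum `∑ₙ t(n)^α`
lies between `λₖ^α ∑ₙ pₖ(n)^α` and `∑ₖ ∑ₙ pₖ(n)^α`. For `α = 1`, concavity of `η(x) = -x log x`
gives `λₖ H(Pₖ) ≤ H(T)`, and subadditivity of `η` together with `η(λp) = λ η(p) + p η(λ)` gives
`H(T) ≤ ∑ₖ (λₖ H(Pₖ) + η(λₖ))`. Hence `R(T) = ⋂ₖ R(Pₖ)`.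
Each `R(Pₖ)` is an up-set containing `(1, ∞)`: `∑ₙ pₙ^α` is antitone in `α` and
`η(x) ≤ x^α / (1 - α)` for `α < 1`. The infimum of a finite intersection of nonempty up-sets is
the largest of their infima.
-/

open Real

noncomputable def renyiTerm (x α : ℝ) : ℝ≥0∞ :=
  if x = 0 then 0 else ENNReal.ofReal (x ^ α)

lemma renyiSum_eq_tsum_renyiTerm (p : ℕ → ℝ) (α : ℝ) :
    renyiSum p α = ∑' n, renyiTerm (p n) α := rfl

section RenyiTerm

variable {x y c α : ℝ}

lemma renyiTerm_mono (hα : 0 ≤ α) (hx : 0 ≤ x) (hxy : x ≤ y) :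
    renyiTerm x α ≤ renyiTerm y α := by
  unfold renyiTerm
  rcases hx.eq_or_lt with rfl | hx
  · simp
  · rw [if_neg hx.ne', if_neg (hx.trans_le hxy).ne']
    exact ENNReal.ofReal_le_ofReal (rpow_le_rpow hx.le hxy hα)

lemma renyiTerm_mul (hc : 0 < c) (hx : 0 ≤ x) :
    renyiTerm (c * x) α = ENNReal.ofReal (c ^ α) * renyiTerm x α := by
  unfold renyiTerm
  rcases hx.eq_or_lt with rfl | hx
  · simp
  · rw [if_neg (mul_pos hc hx).ne', if_neg hx.ne', mul_rpow hc.le hx.le,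
      ENNReal.ofReal_mul (by positivity)]

lemma renyiTerm_antitone (hx0 : 0 ≤ x) (hx1 : x ≤ 1) : Antitone (renyiTerm x) := by
  intro α β hαβ
  unfold renyiTerm
  rcases hx0.eq_or_lt with rfl | hx
  · simp
  · simp only [if_neg hx.ne']
    exact ENNReal.ofReal_le_ofReal (rpow_le_rpow_of_exponent_ge hx hx1 hαβ)

lemma renyiTerm_one : renyiTerm x 1 = ENNReal.ofReal x := by
  unfold renyiTerm
  split_ifs with h <;> simp [h]

lemma negMulLog_le_rpow_div (hx : 0 ≤ x) (hα : α < 1) : negMulLog x ≤ x ^ α / (1 - α) := by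
  rcases hx.eq_or_lt with rfl | hx
  · simp only [negMulLog_zero]
    exact div_nonneg (rpow_nonneg le_rfl α) (by linarith)
  · have hlog := log_le_rpow_div (inv_nonneg.mpr hx.le) (sub_pos.mpr hα)
    have hpow : x * x⁻¹ ^ (1 - α) = x ^ α := by
      rw [inv_rpow hx.le, ← rpow_neg hx.le]
      nth_rw 1 [← rpow_one x]
      rw [← rpow_add hx]
      ring_nf
    rw [log_inv] at hlog
    calc negMulLog x = x * -log x := by rw [negMulLog]; ring
      _ ≤ x * (x⁻¹ ^ (1 - α) / (1 - α)) := mul_le_mul_of_nonneg_left hlog hx.le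
      _ = x ^ α / (1 - α) := by rw [← hpow]; ring

lemma ofReal_negMulLog_le_renyiTerm (hx : 0 ≤ x) (hα : α < 1) :
    ENNReal.ofReal (negMulLog x) ≤ ENNReal.ofReal (1 - α)⁻¹ * renyiTerm x α := by
  unfold renyiTerm
  rcases hx.eq_or_lt with rfl | hx
  · simp
  · rw [if_neg hx.ne', ← ENNReal.ofReal_mul (inv_nonneg.mpr (by linarith))]
    exact ENNReal.ofReal_le_ofReal <| (negMulLog_le_rpow_div hx.le hα).trans_eq (by ring)

end RenyiTerm

lemma shannonEntropy_eq_tsum_negMulLog (p : ℕ → ℝ) :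
    shannonEntropy p = ∑' n, ENNReal.ofReal (negMulLog (p n)) := by
  simp [shannonEntropy, negMulLog_eq_neg]

@[simp]
lemma renyiEntropy_one (p : ℕ → ℝ) : renyiEntropy p 1 = shannonEntropy p := by
  simp [renyiEntropy]

lemma renyiEntropy_lt_top_iff {p : ℕ → ℝ} {α : ℝ} (hα : α ≠ 1) :
    renyiEntropy p α < ∞ ↔ renyiSum p α < ∞ := by
  rw [renyiEntropy, if_neg hα]
  by_cases h : renyiSum p α = ∞ <;> simp [h, lt_top_iff_ne_top]

namespace IsProbDist

variable {p : ℕ → ℝ} (hp : IsProbDist p)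
include hp

lemma nonneg (n : ℕ) : 0 ≤ p n := hp.1 n

lemma le_one_s12 (n : ℕ) : p n ≤ 1 := le_hasSum hp.2 n fun m _ => hp.1 m

lemma tsum_ofReal : ∑' n, ENNReal.ofReal (p n) = 1 := by
  rw [← ENNReal.ofReal_tsum_of_nonneg hp.1 hp.2.summable, hp.2.tsum_eq, ENNReal.ofReal_one]

lemma renyiSum_antitone : Antitone (renyiSum p) := fun _ _ hαβ =>
  ENNReal.tsum_le_tsum fun n => renyiTerm_antitone (hp.nonneg n) (hp.le_one_s12 n) hαβ

lemma renyiSum_one : renyiSum p 1 = 1 := by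
  simp only [renyiSum_eq_tsum_renyiTerm, renyiTerm_one, hp.tsum_ofReal]

lemma shannonEntropy_le_renyiSum {α : ℝ} (hα : α < 1) :
    shannonEntropy p ≤ ENNReal.ofReal (1 - α)⁻¹ * renyiSum p α := by
  rw [shannonEntropy_eq_tsum_negMulLog, renyiSum_eq_tsum_renyiTerm, ← ENNReal.tsum_mul_left]
  exact ENNReal.tsum_le_tsum fun n => ofReal_negMulLog_le_renyiTerm (hp.nonneg n) hα

lemma mem_convRegion_of_one_lt {α : ℝ} (hα : 1 < α) : α ∈ convRegion p := by
  refine ⟨by linarith, (renyiEntropy_lt_top_iff hα.ne').mpr ?_⟩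
  exact (hp.renyiSum_antitone hα.le).trans_lt (hp.renyiSum_one ▸ ENNReal.one_lt_top)

lemma isUpperSet_convRegion : IsUpperSet (convRegion p) := by
  rintro α β hαβ ⟨hα0, hα⟩
  rcases lt_trichotomy β 1 with hβ | rfl | hβ
  · rw [renyiEntropy_lt_top_iff (hαβ.trans_lt hβ).ne] at hα
    exact ⟨hα0.trans hαβ, (renyiEntropy_lt_top_iff hβ.ne).mpr
      ((hp.renyiSum_antitone hαβ).trans_lt hα)⟩
  · rcases hαβ.eq_or_lt with rfl | hα1
    · exact ⟨hα0, hα⟩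
    · rw [renyiEntropy_lt_top_iff hα1.ne] at hα
      refine ⟨zero_le_one, ?_⟩
      rw [renyiEntropy_one]
      exact (hp.shannonEntropy_le_renyiSum hα1).trans_lt
        (ENNReal.mul_lt_top ENNReal.ofReal_lt_top hα)
  · exact hp.mem_convRegion_of_one_lt hβ

end IsProbDist

theorem csInf_iInter_eq_iSup_csInf {α ι : Type*} [ConditionallyCompleteLinearOrder α]
    [DenselyOrdered α] [Finite ι] [Nonempty ι] {S : ι → Set α} (hS : ∀ i, IsUpperSet (S i))
    (hne : ∀ i, (S i).Nonempty) (hbdd : ∀ i, BddBelow (S i)) :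
    sInf (⋂ i, S i) = ⨆ i, sInf (S i) := by
  have hbddAbove {f : ι → α} : BddAbove (Set.range f) := (Set.finite_range f).bddAbove
  have hsub : Set.Ioi (⨆ i, sInf (S i)) ⊆ ⋂ i, S i := fun x hx => Set.mem_iInter.mpr fun i => by
    obtain ⟨y, hy, hyx⟩ := exists_lt_of_csInf_lt (hne i) ((le_ciSup hbddAbove i).trans_lt hx)
    exact hS i hyx.le hy
  have hbddInter : BddBelow (⋂ i, S i) :=
    (hbdd (Classical.arbitrary ι)).mono (Set.iInter_subset S _)
  choose x hx using hne
  have hInter : (⋂ i, S i).Nonempty :=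
    ⟨⨆ i, x i, Set.mem_iInter.mpr fun i => hS i (le_ciSup hbddAbove i) (hx i)⟩
  refine le_antisymm (le_of_forall_gt_imp_ge_of_dense fun y hy => csInf_le hbddInter (hsub hy)) ?_
  exact ciSup_le fun i => csInf_le_csInf (hbdd i) hInter (Set.iInter_subset S i)

lemma negMulLog_sum_le {ι : Type*} {s : Finset ι} {a : ι → ℝ} (ha : ∀ i ∈ s, 0 ≤ a i) :
    negMulLog (∑ i ∈ s, a i) ≤ ∑ i ∈ s, negMulLog (a i) := by
  rw [negMulLog, neg_mul, Finset.sum_mul, ← Finset.sum_neg_distrib]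
  refine Finset.sum_le_sum fun i hi => ?_
  rcases (ha i hi).eq_or_lt with h | h
  · simp [← h]
  · have := log_le_log h (Finset.single_le_sum ha hi)
    rw [negMulLog]
    nlinarith

lemma nonempty_of_sum_eq_one {ι M : Type*} [Fintype ι] [AddCommMonoidWithOne M] [NeZero (1 : M)]
    {w : ι → M} (hw : ∑ k, w k = 1) : Nonempty ι :=
  Finset.univ_nonempty_iff.mp (Finset.nonempty_of_sum_ne_zero (hw ▸ one_ne_zero))

noncomputable def mixture {ι : Type*} [Fintype ι] (w : ι → ℝ) (P : ι → ℕ → ℝ) (n : ℕ) : ℝ :=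
  ∑ k, w k * P k n

section Mixture

variable {ι : Type*} [Fintype ι] {w : ι → ℝ} {P : ι → ℕ → ℝ} {α : ℝ}

lemma mul_le_mixture (hw : ∀ k, 0 ≤ w k) (hP : ∀ k n, 0 ≤ P k n) (k : ι) (n : ℕ) :
    w k * P k n ≤ mixture w P n :=
  Finset.single_le_sum (fun j _ => mul_nonneg (hw j) (hP j n)) (Finset.mem_univ k)

lemma mixture_le_of_forall_le (hw : ∀ k, 0 ≤ w k) (hsum : ∑ k, w k = 1) {n : ℕ} {m : ℝ}
    (hm : ∀ k, P k n ≤ m) : mixture w P n ≤ m :=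
  calc mixture w P n ≤ ∑ k, w k * m :=
        Finset.sum_le_sum fun k _ => mul_le_mul_of_nonneg_left (hm k) (hw k)
    _ = m := by rw [← Finset.sum_mul, hsum, one_mul]

lemma ofReal_rpow_mul_renyiSum_le (hw : ∀ k, 0 < w k) (hP : ∀ k n, 0 ≤ P k n) (hα : 0 ≤ α)
    (k : ι) : ENNReal.ofReal (w k ^ α) * renyiSum (P k) α ≤ renyiSum (mixture w P) α := by
  rw [renyiSum_eq_tsum_renyiTerm, renyiSum_eq_tsum_renyiTerm, ← ENNReal.tsum_mul_left]
  refine ENNReal.tsum_le_tsum fun n => ?_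
  rw [← renyiTerm_mul (hw k) (hP k n)]
  exact renyiTerm_mono hα (mul_nonneg (hw k).le (hP k n))
    (mul_le_mixture (fun j => (hw j).le) hP k n)

lemma renyiSum_mixture_le (hw : ∀ k, 0 ≤ w k) (hsum : ∑ k, w k = 1) (hP : ∀ k n, 0 ≤ P k n)
    (hα : 0 ≤ α) : renyiSum (mixture w P) α ≤ ∑ k, renyiSum (P k) α := by
  have := nonempty_of_sum_eq_one hsum
  simp only [renyiSum_eq_tsum_renyiTerm]
  rw [← Summable.tsum_finsetSum fun k _ => ENNReal.summable]
  refine ENNReal.tsum_le_tsum fun n => ?_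
  obtain ⟨k, hk⟩ := Finite.exists_max fun j => P j n
  calc renyiTerm (mixture w P n) α ≤ renyiTerm (P k n) α :=
        renyiTerm_mono hα (Finset.sum_nonneg fun j _ => mul_nonneg (hw j) (hP j n))
          (mixture_le_of_forall_le hw hsum hk)
    _ ≤ ∑ j, renyiTerm (P j n) α :=
        Finset.single_le_sum (f := fun j => renyiTerm (P j n) α) (fun _ _ => zero_le)
          (Finset.mem_univ k)

lemma renyiSum_mixture_lt_top_iff (hw : ∀ k, 0 < w k) (hsum : ∑ k, w k = 1)
    (hP : ∀ k n, 0 ≤ P k n) (hα : 0 ≤ α) :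
    renyiSum (mixture w P) α < ∞ ↔ ∀ k, renyiSum (P k) α < ∞ := by
  refine ⟨fun h k => ?_, fun h => ?_⟩
  · exact ENNReal.lt_top_of_mul_ne_top_right
      ((ofReal_rpow_mul_renyiSum_le hw hP hα k).trans_lt h).ne
      (ENNReal.ofReal_pos.mpr (rpow_pos_of_pos (hw k) α)).ne'
  · exact (renyiSum_mixture_le (fun k => (hw k).le) hsum hP hα).trans_lt
      (ENNReal.sum_lt_top.mpr fun k _ => h k)

lemma ofReal_mul_shannonEntropy_le (hw : ∀ k, 0 ≤ w k) (hsum : ∑ k, w k = 1)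
    (hP : ∀ k, IsProbDist (P k)) (k : ι) :
    ENNReal.ofReal (w k) * shannonEntropy (P k) ≤ shannonEntropy (mixture w P) := by
  rw [shannonEntropy_eq_tsum_negMulLog, shannonEntropy_eq_tsum_negMulLog, ← ENNReal.tsum_mul_left]
  refine ENNReal.tsum_le_tsum fun n => ?_
  rw [← ENNReal.ofReal_mul (hw k)]
  refine ENNReal.ofReal_le_ofReal ?_
  have jensen : ∑ j, w j * negMulLog (P j n) ≤ negMulLog (mixture w P n) := by
    simpa [mixture] using concaveOn_negMulLog.le_map_sum (t := Finset.univ) (p := fun j => P j n)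
      (fun j _ => hw j) hsum (fun j _ => Set.mem_Ici.mpr ((hP j).nonneg n))
  refine le_trans ?_ jensen
  exact Finset.single_le_sum (f := fun j => w j * negMulLog (P j n))
    (fun j _ => mul_nonneg (hw j) (negMulLog_nonneg ((hP j).nonneg n) ((hP j).le_one_s12 n)))
    (Finset.mem_univ k)

lemma shannonEntropy_mixture_le (hw : ∀ k, 0 ≤ w k) (hsum : ∑ k, w k = 1)
    (hP : ∀ k, IsProbDist (P k)) :
    shannonEntropy (mixture w P) ≤
      ∑ k, (ENNReal.ofReal (w k) * shannonEntropy (P k) + ENNReal.ofReal (negMulLog (w k))) := by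
  have hw1 k : w k ≤ 1 := hsum ▸ Finset.single_le_sum (fun j _ => hw j) (Finset.mem_univ k)
  have hηP k n : 0 ≤ negMulLog (P k n) := negMulLog_nonneg ((hP k).nonneg n) ((hP k).le_one_s12 n)
  have hηw k : 0 ≤ negMulLog (w k) := negMulLog_nonneg (hw k) (hw1 k)
  have key n : ENNReal.ofReal (negMulLog (mixture w P n)) ≤ ∑ k,
      (ENNReal.ofReal (w k) * ENNReal.ofReal (negMulLog (P k n))
        + ENNReal.ofReal (negMulLog (w k)) * ENNReal.ofReal (P k n)) := by
    have hreal : negMulLog (mixture w P n) ≤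
        ∑ k, (w k * negMulLog (P k n) + negMulLog (w k) * P k n) := by
      refine (negMulLog_sum_le fun k _ => mul_nonneg (hw k) ((hP k).nonneg n)).trans_eq ?_
      exact Finset.sum_congr rfl fun k _ => by rw [negMulLog_mul]; ring
    refine (ENNReal.ofReal_le_ofReal hreal).trans_eq ?_
    rw [ENNReal.ofReal_sum_of_nonneg fun k _ =>
      add_nonneg (mul_nonneg (hw k) (hηP k n)) (mul_nonneg (hηw k) ((hP k).nonneg n))]
    refine Finset.sum_congr rfl fun k _ => ?_
    rw [ENNReal.ofReal_add (mul_nonneg (hw k) (hηP k n)) (mul_nonneg (hηw k) ((hP k).nonneg n)),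
      ENNReal.ofReal_mul (hw k), ENNReal.ofReal_mul (hηw k)]
  rw [shannonEntropy_eq_tsum_negMulLog]
  refine (ENNReal.tsum_le_tsum key).trans_eq ?_
  rw [Summable.tsum_finsetSum fun k _ => ENNReal.summable]
  refine Finset.sum_congr rfl fun k _ => ?_
  rw [ENNReal.tsum_add, ENNReal.tsum_mul_left, ENNReal.tsum_mul_left, (hP k).tsum_ofReal,
    mul_one, shannonEntropy_eq_tsum_negMulLog]

lemma shannonEntropy_mixture_lt_top_iff (hw : ∀ k, 0 < w k) (hsum : ∑ k, w k = 1)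
    (hP : ∀ k, IsProbDist (P k)) :
    shannonEntropy (mixture w P) < ∞ ↔ ∀ k, shannonEntropy (P k) < ∞ := by
  refine ⟨fun h k => ?_, fun h => ?_⟩
  · exact ENNReal.lt_top_of_mul_ne_top_right
      ((ofReal_mul_shannonEntropy_le (fun j => (hw j).le) hsum hP k).trans_lt h).ne
      (ENNReal.ofReal_pos.mpr (hw k)).ne'
  · refine (shannonEntropy_mixture_le (fun k => (hw k).le) hsum hP).trans_lt ?_
    exact ENNReal.sum_lt_top.mpr fun k _ =>
      ENNReal.add_lt_top.mpr ⟨ENNReal.mul_lt_top ENNReal.ofReal_lt_top (h k), ENNReal.ofReal_lt_top⟩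

lemma convRegion_mixture (hw : ∀ k, 0 < w k) (hsum : ∑ k, w k = 1)
    (hP : ∀ k, IsProbDist (P k)) : convRegion (mixture w P) = ⋂ k, convRegion (P k) := by
  have := nonempty_of_sum_eq_one hsum
  ext α
  simp only [convRegion, Set.mem_iInter, Set.mem_ofPred_eq, forall_and, forall_const]
  refine and_congr_right fun hα => ?_
  rcases eq_or_ne α 1 with rfl | hα1
  · simpa using shannonEntropy_mixture_lt_top_iff hw hsum hP
  · simpa only [renyiEntropy_lt_top_iff hα1] using
      renyiSum_mixture_lt_top_iff hw hsum (fun k => (hP k).nonneg) hα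

end Mixture

theorem stmt12_general (K : ℕ) (P : Fin K → ℕ → ℝ)
    (hP : ∀ k, IsProbDist (P k)) (lam : Fin K → ℝ)
    (hlam : ∀ k, 0 < lam k) (hsum : ∑ k, lam k = 1) :
    criticalExponent (fun n => ∑ k, lam k * P k n)
        = ⨆ k, criticalExponent (P k) ∧
    convRegion (fun n => ∑ k, lam k * P k n) = ⋂ k, convRegion (P k) := by
  have hregion : convRegion (fun n => ∑ k, lam k * P k n) = ⋂ k, convRegion (P k) :=
    convRegion_mixture hlam hsum hP
  have := nonempty_of_sum_eq_one hsum
  refine ⟨?_, hregion⟩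
  rw [criticalExponent, hregion]
  exact csInf_iInter_eq_iSup_csInf (fun k => (hP k).isUpperSet_convRegion)
    (fun k => ⟨2, (hP k).mem_convRegion_of_one_lt one_lt_two⟩) (fun k => ⟨0, fun _ h => h.1⟩)

/-- For a finite mixture `T = ∑ₖ λₖ Pₖ` of probability
distributions (with `λₖ > 0`, `∑ₖ λₖ = 1`), `α_c(T) = maxₖ α_c(Pₖ)` and
`R(T) = ⋂ₖ R(Pₖ)`. -/
theorem stmt12 (K : ℕ) (hK : 0 < K) (P : Fin K → ℕ → ℝ)
    (hP : ∀ k, IsProbDist (P k)) (lam : Fin K → ℝ)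
    (hlam : ∀ k, 0 < lam k) (hsum : ∑ k, lam k = 1) :
    criticalExponent (fun n => ∑ k, lam k * P k n)
        = ⨆ k, criticalExponent (P k) ∧
    convRegion (fun n => ∑ k, lam k * P k n) = ⋂ k, convRegion (P k) :=
  stmt12_general K P hP lam hlam hsum
end

section
/- For every fixed α > 1, the Rényi entropy H_α is continuous on the set of probability distributions over the positive integers with respect to the total variation distance: if d_TV(P_n, P) → 0, then H_α(P_n) → H_α(P). -/
open Filter Topology
open scoped ENNReal

/-! For `α > 1` every term of a probability distribution lies in `[0, 1]`, where `x ↦ x ^ α` is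
`α`-Lipschitz. Summing termwise, `|∑ qₙ^α - ∑ pₙ^α| ≤ α · d_TV(Q, P)`, so the power sums converge
along `d_TV(Pₙ, P) → 0`. The limit `∑ pₙ^α` is positive, hence
`H_α = (1 - α)⁻¹ log ∑ pₙ^α` converges by continuity of `log` there. -/

lemma abs_rpow_sub_rpow_le_of_mem_Icc {α : ℝ} (hα : 1 ≤ α) {a b : ℝ}
    (ha : a ∈ Set.Icc (0 : ℝ) 1) (hb : b ∈ Set.Icc (0 : ℝ) 1) :
    |a ^ α - b ^ α| ≤ α * |a - b| := by
  have hderiv : ∀ x ∈ Set.Icc (0 : ℝ) 1,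
      HasDerivWithinAt (fun x : ℝ => x ^ α) (α * x ^ (α - 1)) (Set.Icc 0 1) x := fun x _ =>
    (Real.hasDerivAt_rpow_const (Or.inr hα)).hasDerivWithinAt
  have hderiv_le : ∀ x ∈ Set.Icc (0 : ℝ) 1, ‖α * x ^ (α - 1)‖ ≤ α := by
    intro x hx
    rw [Real.norm_eq_abs, abs_mul, abs_of_nonneg (by linarith : (0 : ℝ) ≤ α),
      abs_of_nonneg (Real.rpow_nonneg hx.1 _)]
    nlinarith [Real.rpow_le_one hx.1 hx.2 (by linarith : (0 : ℝ) ≤ α - 1)]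
  simpa only [Real.norm_eq_abs] using
    Convex.norm_image_sub_le_of_norm_hasDerivWithin_le hderiv hderiv_le (convex_Icc 0 1) hb ha

namespace IsProbDist

variable {p q : ℕ → ℝ}

lemma mem_Icc (hp : IsProbDist p) (n : ℕ) : p n ∈ Set.Icc (0 : ℝ) 1 :=
  ⟨hp.1 n, le_hasSum hp.2 n fun i _ => hp.1 i⟩

lemma rpow_nonneg (hp : IsProbDist p) (α : ℝ) (n : ℕ) : 0 ≤ p n ^ α :=
  Real.rpow_nonneg (hp.1 n) α

lemma summable_rpow_s13 (hp : IsProbDist p) {α : ℝ} (hα : 1 ≤ α) :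
    Summable fun n => p n ^ α := by
  refine hp.2.summable.of_nonneg_of_le (hp.rpow_nonneg α) fun n => ?_
  simpa using Real.rpow_le_rpow_of_exponent_ge' (hp.1 n) (hp.mem_Icc n).2 zero_le_one hα

lemma exists_pos (hp : IsProbDist p) : ∃ n, 0 < p n := by
  by_contra! h
  have hzero : p = 0 := funext fun n => le_antisymm (h n) (hp.1 n)
  exact one_ne_zero (hp.2.unique (hzero ▸ hasSum_zero))

lemma tsum_rpow_pos (hp : IsProbDist p) {α : ℝ} (hα : 1 ≤ α) : 0 < ∑' n, p n ^ α := by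
  obtain ⟨n, hn⟩ := hp.exists_pos
  exact (Real.rpow_pos_of_pos hn α).trans_le
    ((hp.summable_rpow_s13 hα).le_tsum n fun i _ => hp.rpow_nonneg α i)

lemma renyiSum_eq (hp : IsProbDist p) {α : ℝ} (hα : 1 ≤ α) :
    renyiSum p α = ENNReal.ofReal (∑' n, p n ^ α) := by
  rw [renyiSum, ENNReal.ofReal_tsum_of_nonneg (hp.rpow_nonneg α) (hp.summable_rpow_s13 hα)]
  refine tsum_congr fun n => ?_
  split_ifs with h
  · simp [h, Real.zero_rpow (by linarith : α ≠ 0)]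
  · rfl

lemma renyiEntropy_eq (hp : IsProbDist p) {α : ℝ} (hα : 1 < α) :
    renyiEntropy p α = ENNReal.ofReal ((1 - α)⁻¹ * Real.log (∑' n, p n ^ α)) := by
  rw [renyiEntropy, if_neg hα.ne', hp.renyiSum_eq hα.le, if_neg ENNReal.ofReal_ne_top,
    ENNReal.toReal_ofReal (tsum_nonneg (hp.rpow_nonneg α))]

lemma abs_tsum_rpow_sub_le (hq : IsProbDist q) (hp : IsProbDist p) {α : ℝ} (hα : 1 ≤ α) :
    |∑' n, q n ^ α - ∑' n, p n ^ α| ≤ α * dTV q p := by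
  have hdiff := (hq.summable_rpow_s13 hα).sub (hp.summable_rpow_s13 hα)
  rw [← (hq.summable_rpow_s13 hα).tsum_sub (hp.summable_rpow_s13 hα), dTV, ← tsum_mul_left]
  calc |∑' n, (q n ^ α - p n ^ α)| ≤ ∑' n, |q n ^ α - p n ^ α| := by
        simpa only [Real.norm_eq_abs] using norm_tsum_le_tsum_norm hdiff.norm
    _ ≤ ∑' n, α * |q n - p n| :=
        hdiff.abs.tsum_le_tsum
          (fun n => abs_rpow_sub_rpow_le_of_mem_Icc hα (hq.mem_Icc n) (hp.mem_Icc n))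
          ((hq.2.summable.sub hp.2.summable).abs.mul_left α)

end IsProbDist

lemma tendsto_tsum_rpow_of_tendsto_dTV {α : ℝ} (hα : 1 ≤ α) {P : ℕ → ℕ → ℝ} {p : ℕ → ℝ}
    (hP : ∀ n, IsProbDist (P n)) (hp : IsProbDist p)
    (hconv : Tendsto (fun n => dTV (P n) p) atTop (𝓝 0)) :
    Tendsto (fun n => ∑' k, P n k ^ α) atTop (𝓝 (∑' k, p k ^ α)) := by
  rw [tendsto_iff_dist_tendsto_zero]
  refine squeeze_zero (fun _ => dist_nonneg) (fun n => ?_) (by simpa using hconv.const_mul α)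
  exact (hP n).abs_tsum_rpow_sub_le hp hα

/-- For every fixed `α > 1`, the Rényi entropy `H_α` is
continuous with respect to the total variation distance: if `d_TV(Pₙ,P) → 0`
then `H_α(Pₙ) → H_α(P)`. -/
theorem stmt13 (α : ℝ) (hα : 1 < α) (P : ℕ → ℕ → ℝ) (p : ℕ → ℝ)
    (hP : ∀ n, IsProbDist (P n)) (hp : IsProbDist p)
    (hconv : Tendsto (fun n => dTV (P n) p) atTop (𝓝 0)) :
    Tendsto (fun n => renyiEntropy (P n) α) atTop (𝓝 (renyiEntropy p α)) := by
  simp only [(hP _).renyiEntropy_eq hα, hp.renyiEntropy_eq hα]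
  have hsums := tendsto_tsum_rpow_of_tendsto_dTV hα.le hP hp hconv
  exact ENNReal.tendsto_ofReal
    ((hsums.log (hp.tsum_rpow_pos hα.le).ne').const_mul (1 - α)⁻¹)
end

section
/- For every α ≥ 0, the Rényi entropy H_α is lower semicontinuous on the set of probability distributions over the positive integers with respect to the total variation distance: if d_TV(P_n, P) → 0, then liminf_{n→∞} H_α(P_n) ≥ H_α(P). -/
/-!
Convergence in total variation gives convergence of every mass `pₖ`. Each summand of
`∑ pₖ^α` (with `0^0 = 0`) and of `-∑ pₖ log pₖ` is lower semicontinuous in `pₖ`, so by Fatou's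
lemma for sums both sums are lower semicontinuous. For `α < 1`, `H_α` is a nondecreasing
continuous function of `∑ pₖ^α` on `[0, ∞]`; for `α > 1` it is a nonincreasing continuous
function of that sum, which is then upper semicontinuous as well, because
`∑ pₖ^α + ∑ (pₖ - pₖ^α) = 1` and the second sum is lower semicontinuous by Fatou again.
-/

open Filter Topology
open scoped ENNReal

theorem ENNReal.tsum_le_liminf_tsum {f : ℕ → ℕ → ℝ≥0∞} {g : ℕ → ℝ≥0∞}
    (h : ∀ k, g k ≤ liminf (fun n => f n k) atTop) :
    ∑' k, g k ≤ liminf (fun n => ∑' k, f n k) atTop := by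
  refine (ENNReal.tsum_le_tsum h).trans ?_
  simpa [MeasureTheory.lintegral_count] using
    MeasureTheory.lintegral_liminf_le (μ := MeasureTheory.Measure.count) (f := f)
      fun n => measurable_of_countable _

theorem ENNReal.limsup_le_of_add_eq {ι : Type*} {l : Filter ι} [l.NeBot] {u v : ι → ℝ≥0∞}
    {a b c : ℝ≥0∞} (hc : c ≠ ∞) (huv : ∀ i, u i + v i = c) (hab : a + b = c)
    (hb : b ≤ liminf v l) : limsup u l ≤ a := by
  have hu : u = fun i => c - v i := funext fun i =>
    ENNReal.eq_sub_of_add_eq (ne_top_of_le_ne_top hc (le_add_self.trans (huv i).le)) (huv i)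
  have hmap := antitone_const_tsub.map_liminf_of_continuousAt (F := l) v
    (ENNReal.continuous_sub_left hc).continuousAt
  rw [hu, ← Function.comp_def (c - ·) v, ← hmap,
    ENNReal.eq_sub_of_add_eq (ne_top_of_le_ne_top hc (le_add_self.trans hab.le)) hab]
  exact tsub_le_tsub_left hb c

noncomputable def scaledPosLog (c : ℝ) (s : ℝ≥0∞) : ℝ≥0∞ :=
  ENNReal.ofReal c * (ENNReal.log s).toENNReal

lemma monotone_scaledPosLog (c : ℝ) : Monotone (scaledPosLog c) := fun _ _ h =>
  mul_le_mul_right (EReal.toENNReal_le_toENNReal (ENNReal.log_monotone h)) _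

lemma continuous_scaledPosLog (c : ℝ) : Continuous (scaledPosLog c) :=
  (ENNReal.continuous_const_mul ENNReal.ofReal_ne_top).comp
    (EReal.continuous_toENNReal.comp ENNReal.continuous_log)

lemma scaledPosLog_of_ne_top {c : ℝ} (hc : 0 ≤ c) {s : ℝ≥0∞} (hs : s ≠ ∞) :
    scaledPosLog c s = ENNReal.ofReal (c * Real.log s.toReal) := by
  rcases eq_or_ne s 0 with rfl | h0
  · simp [scaledPosLog]
  · rw [scaledPosLog, ENNReal.log_pos_real h0 hs, ENNReal.ofReal_mul hc]
    simp

lemma scaledPosLog_top {c : ℝ} (hc : 0 < c) : scaledPosLog c ∞ = ∞ := by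
  simp [scaledPosLog, hc]

namespace IsProbDist

variable {p : ℕ → ℝ}

lemma le_one_s15 (hp : IsProbDist p) (k : ℕ) : p k ≤ 1 :=
  le_hasSum hp.2 k fun j _ => hp.1 j

lemma renyiSum_ne_zero (hp : IsProbDist p) (α : ℝ) : renyiSum p α ≠ 0 := by
  obtain ⟨k, hk⟩ : ∃ k, p k ≠ 0 := by
    by_contra! h
    exact one_ne_zero (hp.2.unique (by simp [funext h]))
  refine ENNReal.summable.tsum_ne_zero_iff.mpr ⟨k, ?_⟩
  simpa [hk] using Real.rpow_pos_of_pos ((hp.1 k).lt_of_ne' hk) α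

lemma renyiSum_add_tsum_ofReal_sub_rpow (hp : IsProbDist p) {α : ℝ} (hα : 1 ≤ α) :
    renyiSum p α + ∑' k, ENNReal.ofReal (p k - p k ^ α) = 1 := by
  have hterm (k : ℕ) : (if p k = 0 then 0 else ENNReal.ofReal (p k ^ α)) +
      ENNReal.ofReal (p k - p k ^ α) = ENNReal.ofReal (p k) := by
    split_ifs with h
    · simp [h, Real.zero_rpow (by linarith : α ≠ 0)]
    · rw [← ENNReal.ofReal_add (Real.rpow_nonneg (hp.1 k) α) (sub_nonneg.2
        (Real.rpow_le_self_of_le_one (hp.1 k) (hp.le_one_s15 k) hα)), add_sub_cancel]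
  rw [renyiSum, ← ENNReal.tsum_add, tsum_congr hterm,
    ← ENNReal.ofReal_tsum_of_nonneg hp.1 hp.2.summable, hp.2.tsum_eq, ENNReal.ofReal_one]

lemma renyiSum_ne_top (hp : IsProbDist p) {α : ℝ} (hα : 1 ≤ α) : renyiSum p α ≠ ∞ :=
  ne_top_of_le_ne_top ENNReal.one_ne_top
    ((hp.renyiSum_add_tsum_ofReal_sub_rpow hα).symm ▸ le_self_add)

lemma abs_sub_le_dTV (hp : IsProbDist p) {q : ℕ → ℝ} (hq : IsProbDist q) (k : ℕ) :
    |p k - q k| ≤ dTV p q :=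
  ((hp.2.summable.sub hq.2.summable).abs).le_tsum k fun _ _ => abs_nonneg _

end IsProbDist

lemma tendsto_apply_of_tendsto_dTV {P : ℕ → ℕ → ℝ} {p : ℕ → ℝ}
    (hP : ∀ n, IsProbDist (P n)) (hp : IsProbDist p)
    (hconv : Tendsto (fun n => dTV (P n) p) atTop (𝓝 0)) (k : ℕ) :
    Tendsto (fun n => P n k) atTop (𝓝 (p k)) :=
  tendsto_iff_dist_tendsto_zero.2 <|
    squeeze_zero (fun _ => dist_nonneg) (fun n => (hP n).abs_sub_le_dTV hp k) hconv

lemma le_liminf_ite_ofReal_rpow {ι : Type*} {l : Filter ι} [l.NeBot] {x : ι → ℝ} {y : ℝ}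
    (h : Tendsto x l (𝓝 y)) (α : ℝ) :
    (if y = 0 then 0 else ENNReal.ofReal (y ^ α)) ≤
      liminf (fun i => if x i = 0 then 0 else ENNReal.ofReal (x i ^ α)) l := by
  by_cases hy : y = 0
  · simp [hy]
  · rw [if_neg hy]
    refine (((ENNReal.continuous_ofReal.continuousAt.comp
      (Real.continuousAt_rpow_const _ _ (Or.inl hy))).tendsto.comp h).liminf_eq.ge).trans_eq
      (liminf_congr ?_)
    filter_upwards [h.eventually_ne hy] with i hi
    simp [hi]

section Convergence

variable {P : ℕ → ℕ → ℝ} {p : ℕ → ℝ}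

lemma renyiSum_le_liminf (hpt : ∀ k, Tendsto (fun n => P n k) atTop (𝓝 (p k))) (α : ℝ) :
    renyiSum p α ≤ liminf (fun n => renyiSum (P n) α) atTop :=
  ENNReal.tsum_le_liminf_tsum fun k => le_liminf_ite_ofReal_rpow (hpt k) α

lemma limsup_renyiSum_le {α : ℝ} (hα : 1 < α) (hP : ∀ n, IsProbDist (P n))
    (hp : IsProbDist p) (hpt : ∀ k, Tendsto (fun n => P n k) atTop (𝓝 (p k))) :
    limsup (fun n => renyiSum (P n) α) atTop ≤ renyiSum p α := by
  refine ENNReal.limsup_le_of_add_eq ENNReal.one_ne_top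
    (fun n => (hP n).renyiSum_add_tsum_ofReal_sub_rpow hα.le)
    (hp.renyiSum_add_tsum_ofReal_sub_rpow hα.le) (ENNReal.tsum_le_liminf_tsum fun k => ?_)
  have hcont : Continuous fun x : ℝ => ENNReal.ofReal (x - x ^ α) :=
    ENNReal.continuous_ofReal.comp
      (continuous_id.sub (Real.continuous_rpow_const (by linarith)))
  exact ((hcont.tendsto _).comp (hpt k)).liminf_eq.ge

lemma shannonEntropy_le_liminf (hpt : ∀ k, Tendsto (fun n => P n k) atTop (𝓝 (p k))) :
    shannonEntropy p ≤ liminf (fun n => shannonEntropy (P n)) atTop :=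
  ENNReal.tsum_le_liminf_tsum fun k =>
    (((ENNReal.continuous_ofReal.comp Real.continuous_mul_log.neg).tendsto _).comp
      (hpt k)).liminf_eq.ge

lemma renyiEntropy_eq_scaledPosLog_of_lt_one {α : ℝ} (hα : α < 1) (q : ℕ → ℝ) :
    renyiEntropy q α = scaledPosLog (1 - α)⁻¹ (renyiSum q α) := by
  have hc : 0 < (1 - α)⁻¹ := inv_pos.2 (sub_pos.2 hα)
  rw [renyiEntropy, if_neg hα.ne]
  split_ifs with htop
  · rw [htop, scaledPosLog_top hc]
  · rw [scaledPosLog_of_ne_top hc.le htop]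

lemma renyiEntropy_eq_scaledPosLog_inv_of_one_lt {α : ℝ} (hα : 1 < α) {q : ℕ → ℝ}
    (h0 : renyiSum q α ≠ 0) (htop : renyiSum q α ≠ ∞) :
    renyiEntropy q α = scaledPosLog (α - 1)⁻¹ (renyiSum q α)⁻¹ := by
  rw [renyiEntropy, if_neg hα.ne', if_neg htop,
    scaledPosLog_of_ne_top (inv_pos.2 (sub_pos.2 hα)).le (ENNReal.inv_ne_top.2 h0),
    ENNReal.toReal_inv, Real.log_inv, ← neg_sub α 1, inv_neg, neg_mul_comm]

lemma renyiEntropy_le_liminf_of_lt_one {α : ℝ} (hα : α < 1)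
    (hpt : ∀ k, Tendsto (fun n => P n k) atTop (𝓝 (p k))) :
    renyiEntropy p α ≤ liminf (fun n => renyiEntropy (P n) α) atTop := by
  simp only [renyiEntropy_eq_scaledPosLog_of_lt_one hα]
  calc scaledPosLog (1 - α)⁻¹ (renyiSum p α)
      ≤ scaledPosLog (1 - α)⁻¹ (liminf (fun n => renyiSum (P n) α) atTop) :=
        monotone_scaledPosLog _ (renyiSum_le_liminf hpt α)
    _ = _ := (monotone_scaledPosLog _).map_liminf_of_continuousAt _
        (continuous_scaledPosLog _).continuousAt

lemma renyiEntropy_le_liminf_of_one_lt {α : ℝ} (hα : 1 < α) (hP : ∀ n, IsProbDist (P n))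
    (hp : IsProbDist p) (hpt : ∀ k, Tendsto (fun n => P n k) atTop (𝓝 (p k))) :
    renyiEntropy p α ≤ liminf (fun n => renyiEntropy (P n) α) atTop := by
  have hH {q : ℕ → ℝ} (hq : IsProbDist q) :=
    renyiEntropy_eq_scaledPosLog_inv_of_one_lt hα (hq.renyiSum_ne_zero α)
      (hq.renyiSum_ne_top hα.le)
  simp only [hH hp, hH (hP _)]
  calc scaledPosLog (α - 1)⁻¹ (renyiSum p α)⁻¹
      ≤ scaledPosLog (α - 1)⁻¹ (limsup (fun n => renyiSum (P n) α) atTop)⁻¹ :=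
        monotone_scaledPosLog _ (ENNReal.inv_le_inv.2 (limsup_renyiSum_le hα hP hp hpt))
    _ = scaledPosLog (α - 1)⁻¹ (liminf (fun n => (renyiSum (P n) α)⁻¹) atTop) := by
        rw [ENNReal.inv_limsup]
    _ = _ := (monotone_scaledPosLog _).map_liminf_of_continuousAt _
        (continuous_scaledPosLog _).continuousAt

end Convergence

theorem stmt15_general (α : ℝ) (P : ℕ → ℕ → ℝ) (p : ℕ → ℝ)
    (hP : ∀ n, IsProbDist (P n)) (hp : IsProbDist p)
    (hconv : Tendsto (fun n => dTV (P n) p) atTop (𝓝 0)) :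
    renyiEntropy p α ≤ Filter.liminf (fun n => renyiEntropy (P n) α) atTop := by
  have hpt := tendsto_apply_of_tendsto_dTV hP hp hconv
  rcases lt_trichotomy α 1 with hlt | rfl | hgt
  · exact renyiEntropy_le_liminf_of_lt_one hlt hpt
  · simpa only [renyiEntropy, ↓reduceIte] using shannonEntropy_le_liminf hpt
  · exact renyiEntropy_le_liminf_of_one_lt hgt hP hp hpt

/-- For every `α ≥ 0`, the Rényi entropy `H_α` is lower
semicontinuous with respect to the total variation distance:
if `d_TV(Pₙ,P) → 0` then `liminf H_α(Pₙ) ≥ H_α(P)`. -/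
theorem stmt15 (α : ℝ) (hα : 0 ≤ α) (P : ℕ → ℕ → ℝ) (p : ℕ → ℝ)
    (hP : ∀ n, IsProbDist (P n)) (hp : IsProbDist p)
    (hconv : Tendsto (fun n => dTV (P n) p) atTop (𝓝 0)) :
    renyiEntropy p α ≤ Filter.liminf (fun n => renyiEntropy (P n) α) atTop :=
  stmt15_general α P p hP hp hconv
end
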